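/- Let U = {(u,v) ∈ ℝ⁴ × ℝ⁴ : u, v unit spacelike, linearly independent, ⟨u,v⟩ ≤ −1}. For (u,v) ∈ U, the unique λ for which p = (λ−1)u − λv is lightlike and ⟨p,v⟩ ≥ 0 is given by the explicit formula λ(u,v) = ((1 − A) − √(A² − 1)) / (2(1 − A)) where A = ⟨u,v⟩. In particular, the map (u,v) ↦ p(u,v) = (λ(u,v) − 1)u − λ(u,v)v is continuous on U (including at pairs with ⟨u,v⟩ = −1, where the two roots of the defining quadratic coalesce). -/

import Mathlib

/-- The Lorentz (Minkowski) inner product on ℝ⁴. -/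
def lor (u v : Fin 4 → ℝ) : ℝ :=
  u 0 * v 0 + u 1 * v 1 + u 2 * v 2 - u 3 * v 3

/-- A vector is lightlike if it is nonzero and Lorentz-null. -/
def IsLightlike (u : Fin 4 → ℝ) : Prop := u ≠ 0 ∧ lor u u = 0

/-- The set of pairs of linearly independent unit spacelike vectors whose
disks are disjoint or tangent. -/
def U : Set ((Fin 4 → ℝ) × (Fin 4 → ℝ)) :=
  {uv | lor uv.1 uv.1 = 1 ∧ lor uv.2 uv.2 = 1 ∧
    LinearIndependent ℝ ![uv.1, uv.2] ∧ lor uv.1 uv.2 ≤ -1}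

/-- The explicit root of the quadratic. -/
noncomputable def lamFun (uv : (Fin 4 → ℝ) × (Fin 4 → ℝ)) : ℝ :=
  ((1 - lor uv.1 uv.2) - Real.sqrt ((lor uv.1 uv.2) ^ 2 - 1)) /
    (2 * (1 - lor uv.1 uv.2))

/-- The corresponding lightlike point of the pencil. -/
noncomputable def pFun (uv : (Fin 4 → ℝ) × (Fin 4 → ℝ)) : Fin 4 → ℝ :=
  (lamFun uv - 1) • uv.1 - lamFun uv • uv.2

lemma lor_pp (u v : Fin 4 → ℝ) (l : ℝ) :
    lor ((l - 1) • u - l • v) ((l - 1) • u - l • v)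
      = (l-1)^2 * lor u u - 2*l*(l-1) * lor u v + l^2 * lor v v := by
  simp [lor, Pi.sub_apply, Pi.smul_apply, smul_eq_mul]; ring

lemma lor_pv (u v : Fin 4 → ℝ) (l : ℝ) :
    lor ((l - 1) • u - l • v) v = (l-1) * lor u v - l * lor v v := by
  simp [lor, Pi.sub_apply, Pi.smul_apply, smul_eq_mul]; ring

theorem stmt_6 :
    (∀ uv ∈ U,
      (IsLightlike (pFun uv) ∧ 0 ≤ lor (pFun uv) uv.2) ∧
      (∀ l : ℝ, IsLightlike ((l - 1) • uv.1 - l • uv.2) →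
        0 ≤ lor ((l - 1) • uv.1 - l • uv.2) uv.2 → l = lamFun uv)) ∧
    ContinuousOn pFun U := by
  constructor
  · rintro ⟨u, v⟩ ⟨hu, hv, hind, hA⟩
    simp only at hu hv hind hA
    set A : ℝ := lor u v with hAdef
    have ht : (2:ℝ) ≤ 1 - A := by linarith
    have hd : (0:ℝ) < 2 * (1 - A) := by linarith
    have hsq : (0:ℝ) ≤ A ^ 2 - 1 := by nlinarith
    set s : ℝ := Real.sqrt (A ^ 2 - 1) with hsdef
    have hs0 : 0 ≤ s := Real.sqrt_nonneg _
    have hs2 : s ^ 2 = A ^ 2 - 1 := Real.sq_sqrt hsq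
    have hlam : lamFun (u, v) = ((1 - A) - s) / (2 * (1 - A)) := rfl
    -- quadratic value at any l
    have hQ : ∀ l : ℝ, lor ((l - 1) • u - l • v) ((l - 1) • u - l • v)
        = 2 * (1 - A) * l ^ 2 - 2 * (1 - A) * l + 1 := by
      intro l
      rw [lor_pp, hu, hv, ← hAdef]; ring
    have hPv : ∀ l : ℝ, lor ((l - 1) • u - l • v) v = (l - 1) * A - l := by
      intro l
      rw [lor_pv, hv, ← hAdef]; ring
    have hne : ∀ l : ℝ, ((l - 1) • u - l • v) ≠ 0 := by
      intro l h
      have h' : (l - 1) • u + (-l) • v = 0 := by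
        rw [neg_smul]; rw [sub_eq_add_neg] at h; exact h
      obtain ⟨h1, h2⟩ := (LinearIndependent.pair_iff.mp hind) (l - 1) (-l) h'
      have : l = 0 := by linarith [neg_eq_zero.mp h2]
      rw [this] at h1; norm_num at h1
    set lam : ℝ := ((1 - A) - s) / (2 * (1 - A)) with hlamdef
    have hlameq : lam * (2 * (1 - A)) = (1 - A) - s := by
      rw [hlamdef, div_mul_cancel₀]; exact ne_of_gt hd
    constructor
    · refine ⟨⟨hne lam, ?_⟩, ?_⟩
      · rw [show pFun (u, v) = (lam - 1) • u - lam • v from rfl, hQ]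
        nlinarith [hlameq, hs2]
      · rw [show pFun (u, v) = (lam - 1) • u - lam • v from rfl, hPv]
        nlinarith [hlameq, hs2]
    · intro l hl hl2
      obtain ⟨-, hl0⟩ := hl
      rw [hQ] at hl0
      rw [hPv] at hl2
      -- (2(1-A) l - ((1-A) - s)) * (2(1-A) l - ((1-A) + s)) = 0
      have hfac : (2 * (1 - A) * l - ((1 - A) - s)) * (2 * (1 - A) * l - ((1 - A) + s)) = 0 := by
        nlinarith [hs2, hl0]
      rcases mul_eq_zero.mp hfac with h | h
      · rw [hlam, hlamdef, eq_div_iff (ne_of_gt hd)]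
        linarith
      · -- l is the other root; side condition forces s = 0
        have hls : 2 * (1 - A) * l = (1 - A) + s := by linarith
        have hle : l * (1 - A) ≤ (1 - A) - 1 + A * 0 := by nlinarith
        have hs_le : s ≤ -1 - A := by nlinarith
        have hA1 : A = -1 := by nlinarith [hs2, hs0]
        have hs0' : s = 0 := by nlinarith [hs2]
        rw [hlam, hlamdef, eq_div_iff (ne_of_gt hd)]
        linarith
  · have hclor : Continuous (fun uv : (Fin 4 → ℝ) × (Fin 4 → ℝ) => lor uv.1 uv.2) := by
      unfold lor; fun_prop
    have hlamc : ContinuousOn lamFun U := by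
      apply ContinuousOn.div
      · exact ((continuous_const.sub hclor).sub
          ((hclor.pow 2).sub continuous_const).sqrt).continuousOn
      · exact (continuous_const.mul (continuous_const.sub hclor)).continuousOn
      · rintro ⟨u, v⟩ ⟨-, -, -, hA⟩
        simp only at hA ⊢
        intro h
        have : (0:ℝ) < 2 * (1 - lor u v) := by nlinarith
        linarith
    have : pFun = fun uv => (lamFun uv - 1) • uv.1 - lamFun uv • uv.2 := rfl
    rw [this]
    exact ((hlamc.sub continuousOn_const).smul continuous_fst.continuousOn).sub
      (hlamc.smul continuous_snd.continuousOn)
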